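/- arXiv:1502.05306 — 2 statements merged into one kernel-verified Lean document; each statement's English description precedes it below -/
import Mathlib

section
/- If a rational map φ of degree d ≥ 2 commutes with the imaginary reflection τ(z) = -1/conj(z), then d is odd. -/
/-!
Write `φ = P / Q` with `d = max (deg P) (deg Q)` and `R* = X ^ d R(-1/X)` (`negReflect d R`).
At a generic point `z`, `τ (φ z) = φ (τ z)` reads
`conj (P z) P(-1/z̄) + conj (Q z) Q(-1/z̄) = 0`, i.e. `P̄ P* + Q̄ Q* = 0` as polynomials.
Since `P̄, Q̄` are coprime and `P*, Q*` have degree at most `d`, this forces `P* = c Q̄` and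
`Q* = -c P̄` for a constant `c`. Conjugating the first identity and applying `*` once more
(`R** = (-1) ^ d R`, the algebraic shadow of `τ ∘ τ = id`) gives `(-1) ^ d P̄ = -|c|² P̄`,
so `(-1) ^ d < 0` and `d` is odd.
-/

open OnePoint Complex Polynomial

/-- The Möbius transformation determined by the matrix `[[a,b],[c,d]]`,
acting on the Riemann sphere `OnePoint ℂ`. -/
noncomputable def moeb (a b c d : ℂ) (p : OnePoint ℂ) : OnePoint ℂ :=
  OnePoint.elim p (if c = 0 then ∞ else ((a / c : ℂ) : OnePoint ℂ))
    (fun z => if c * z + d = 0 then ∞ else (((a * z + b) / (c * z + d) : ℂ) : OnePoint ℂ))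

/-- Complex conjugation extended to the Riemann sphere. -/
noncomputable def sphConj (p : OnePoint ℂ) : OnePoint ℂ :=
  OnePoint.elim p ∞ (fun z => ((starRingEnd ℂ) z : OnePoint ℂ))

/-- The imaginary reflection `τ(z) = -1/conj z` on the Riemann sphere. -/
noncomputable def tauSph (p : OnePoint ℂ) : OnePoint ℂ :=
  moeb 0 (-1) 1 0 (sphConj p)

/-- The rational map on the Riemann sphere determined by a quotient `P/Q`
of (coprime) polynomials. -/
noncomputable def ratMap (P Q : Polynomial ℂ) (p : OnePoint ℂ) : OnePoint ℂ :=
  OnePoint.elim p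
    (if Q.degree < P.degree then ∞
     else ((P.coeff Q.natDegree / Q.leadingCoeff : ℂ) : OnePoint ℂ))
    (fun z => if Q.eval z = 0 then ∞ else ((P.eval z / Q.eval z : ℂ) : OnePoint ℂ))

open Filter ComplexConjugate

theorem IsCoprime.exists_eq_mul_of_mul_add_mul_eq_zero {R : Type*} [CommRing R] {a b A B : R}
    (hab : IsCoprime a b) (h : a * A + b * B = 0) : ∃ g, A = b * g ∧ B = -(a * g) := by
  obtain ⟨u, v, huv⟩ := hab
  exact ⟨v * A - u * B, by linear_combination u * h - A * huv,
    by linear_combination v * h - B * huv⟩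

namespace Polynomial

lemma eq_of_eventually_cofinite_eval_eq {R : Type*} [CommRing R] [IsDomain R] [Infinite R]
    {p q : R[X]} (h : ∀ᶠ x in cofinite, p.eval x = q.eval x) : p = q :=
  eq_of_infinite_eval_eq p q (frequently_cofinite_iff_infinite.mp h.frequently)

lemma eventually_cofinite_eval_ne_zero {R : Type*} [CommRing R] [IsDomain R] {p : R[X]}
    (hp : p ≠ 0) : ∀ᶠ x in cofinite, p.eval x ≠ 0 :=
  eventually_cofinite.mpr <| by simpa using finite_setOfPred_isRoot hp

section NegReflect

variable {R : Type*} [CommRing R]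

noncomputable def negReflect (d : ℕ) (p : R[X]) : R[X] := reflect d (p.comp (-X))

lemma natDegree_comp_neg_X_le (p : R[X]) : (p.comp (-X)).natDegree ≤ p.natDegree :=
  natDegree_comp_le.trans <| mul_le_of_le_one_right' <| (natDegree_neg X).trans_le natDegree_X_le

lemma natDegree_negReflect_le {d : ℕ} {p : R[X]} (hp : p.natDegree ≤ d) :
    (negReflect d p).natDegree ≤ d :=
  natDegree_reflect_le.trans (max_le le_rfl ((natDegree_comp_neg_X_le p).trans hp))

lemma negReflect_C_mul (d : ℕ) (a : R) (p : R[X]) :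
    negReflect d (C a * p) = C a * negReflect d p := by
  rw [negReflect, negReflect, mul_comp, C_comp, reflect_C_mul]

lemma map_negReflect {S : Type*} [CommRing S] (f : R →+* S) (d : ℕ) (p : R[X]) :
    (negReflect d p).map f = negReflect d (p.map f) := by
  rw [negReflect, negReflect, ← reflect_map, Polynomial.map_comp, Polynomial.map_neg, map_X]

lemma eval_negReflect {K : Type*} [Field K] {d : ℕ} {p : K[X]} (hp : p.natDegree ≤ d) {x : K}
    (hx : x ≠ 0) : (negReflect d p).eval x = x ^ d * p.eval (-x⁻¹) := by
  let := invertibleOfNonzero (inv_ne_zero hx)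
  have h := eval₂_reflect_mul_pow (RingHom.id K) x⁻¹ d (p.comp (-X))
    ((natDegree_comp_neg_X_le p).trans hp)
  rw [invOf_eq_inv, inv_inv, ← eval, ← eval, eval_comp] at h
  simp only [eval_neg, eval_X] at h
  rw [negReflect, ← h, inv_pow]
  field_simp

lemma negReflect_negReflect {K : Type*} [Field K] [Infinite K] {d : ℕ} {p : K[X]}
    (hp : p.natDegree ≤ d) : negReflect d (negReflect d p) = C ((-1) ^ d) * p := by
  refine eq_of_eventually_cofinite_eval_eq ?_
  filter_upwards [eventually_cofinite_ne 0] with x hx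
  rw [eval_negReflect (natDegree_negReflect_le hp) hx, eval_negReflect hp (by simpa using hx),
    eval_mul, eval_C, inv_neg, inv_inv, neg_neg, ← mul_assoc, ← mul_pow, mul_neg,
    mul_inv_cancel₀ hx]

end NegReflect

lemma natDegree_eq_zero_of_natDegree_mul_le {R : Type*} [Semiring R] [NoZeroDivisors R]
    {a g : R[X]} (ha : a ≠ 0) (h : (a * g).natDegree ≤ a.natDegree) : g.natDegree = 0 := by
  rcases eq_or_ne g 0 with rfl | hg
  · exact natDegree_zero
  · rw [natDegree_mul ha hg] at h
    omega

end Polynomial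

theorem IsCoprime.exists_C_of_mul_add_mul_eq_zero {K : Type*} [Field K] {a b A B : K[X]}
    (hab : IsCoprime a b) (ha : a ≠ 0) (hb : b ≠ 0)
    (hA : A.natDegree ≤ max a.natDegree b.natDegree)
    (hB : B.natDegree ≤ max a.natDegree b.natDegree) (h : a * A + b * B = 0) :
    ∃ c, A = C c * b ∧ B = -(C c * a) := by
  obtain ⟨g, rfl, rfl⟩ := hab.exists_eq_mul_of_mul_add_mul_eq_zero h
  have hg : g.natDegree = 0 := by
    rcases le_total a.natDegree b.natDegree with hle | hle
    · exact natDegree_eq_zero_of_natDegree_mul_le hb (by rwa [max_eq_right hle] at hA)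
    · exact natDegree_eq_zero_of_natDegree_mul_le ha
        (by rwa [max_eq_left hle, natDegree_neg] at hB)
  rw [eq_C_of_natDegree_eq_zero hg]
  exact ⟨_, mul_comm _ _, by rw [mul_comm]⟩

lemma tauSph_coe {z : ℂ} (hz : z ≠ 0) : tauSph z = ↑(-(conj z)⁻¹) := by
  simp [tauSph, sphConj, moeb, hz, neg_div, one_div]

lemma tauSph_coe_zero : tauSph (0 : ℂ) = ∞ := by
  simp [tauSph, sphConj, moeb]

lemma tauSph_infty : tauSph ∞ = (0 : ℂ) := by
  simp [tauSph, sphConj, moeb]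

lemma ratMap_coe {P Q : ℂ[X]} {z : ℂ} (hz : Q.eval z ≠ 0) :
    ratMap P Q z = ↑(P.eval z / Q.eval z) := by
  simp [ratMap, hz]

section CommuteTau

variable {P Q : ℂ[X]}

-- Otherwise `ratMap P Q` is constant, which cannot commute with the fixed-point-free `tauSph`.
lemma ne_zero_left_of_commute_tauSph (hcop : IsCoprime P Q)
    (h : Function.Commute tauSph (ratMap P Q)) : P ≠ 0 := by
  rintro rfl
  obtain ⟨a, ha, rfl⟩ := Polynomial.isUnit_iff.mp (isCoprime_zero_left.mp hcop)
  have := h (0 : ℂ)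
  simp [ratMap, tauSph_coe_zero, ha.ne_zero] at this

lemma ne_zero_right_of_commute_tauSph (hcop : IsCoprime P Q)
    (h : Function.Commute tauSph (ratMap P Q)) : Q ≠ 0 := by
  rintro rfl
  have hP : P ≠ 0 := (isCoprime_zero_right.mp hcop).ne_zero
  have := h (0 : ℂ)
  simp [ratMap, tauSph_coe_zero, tauSph_infty, hP] at this

lemma conj_mul_add_conj_mul_eq_zero_of_commute_tauSph (h : Function.Commute tauSph (ratMap P Q))
    {z : ℂ} (hz : z ≠ 0) (hPz : P.eval z ≠ 0) (hQz : Q.eval z ≠ 0)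
    (hQτz : Q.eval (-(conj z)⁻¹) ≠ 0) :
    conj (P.eval z) * P.eval (-(conj z)⁻¹) + conj (Q.eval z) * Q.eval (-(conj z)⁻¹) = 0 := by
  have hτ := h z
  rw [ratMap_coe hQz, tauSph_coe hz, ratMap_coe hQτz, tauSph_coe (div_ne_zero hPz hQz),
    OnePoint.coe_eq_coe, map_div₀, inv_div, neg_div', div_eq_div_iff (by simpa using hPz) hQτz]
    at hτ
  linear_combination -hτ

lemma map_conj_mul_negReflect_add_eq_zero_of_commute_tauSph {d : ℕ} (hP : P ≠ 0) (hQ : Q ≠ 0)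
    (hPd : P.natDegree ≤ d) (hQd : Q.natDegree ≤ d) (h : Function.Commute tauSph (ratMap P Q)) :
    P.map conj * negReflect d P + Q.map conj * negReflect d Q = 0 := by
  have hconj : Function.Injective conj := (starRingEnd ℂ).injective
  have hτ : Function.Injective fun z : ℂ => -(conj z)⁻¹ :=
    neg_injective.comp (inv_injective.comp hconj)
  have hvanish : ∀ᶠ z in cofinite, eval (conj z) (P.map conj * negReflect d P +
      Q.map conj * negReflect d Q) = 0 := by
    filter_upwards [eventually_cofinite_ne 0, eventually_cofinite_eval_ne_zero hP,
      eventually_cofinite_eval_ne_zero hQ,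
      hτ.tendsto_cofinite.eventually (eventually_cofinite_eval_ne_zero hQ)] with z hz hPz hQz hQτz
    have hz' : conj z ≠ 0 := by simpa using hz
    rw [eval_add, eval_mul, eval_mul, eval_map, eval_map, eval₂_at_apply, eval₂_at_apply,
      eval_negReflect hPd hz', eval_negReflect hQd hz']
    linear_combination
      conj z ^ d * conj_mul_add_conj_mul_eq_zero_of_commute_tauSph h hz hPz hQz hQτz
  refine eq_of_eventually_cofinite_eval_eq ?_
  filter_upwards [hconj.tendsto_cofinite.eventually hvanish] with u hu
  simpa using hu

end CommuteTau

lemma odd_of_neg_one_pow_eq_neg_conj_mul_self {d : ℕ} {c : ℂ}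
    (h : (-1 : ℂ) ^ d = -(conj c * c)) : Odd d := by
  refine Nat.not_even_iff_odd.mp fun hd => ?_
  rw [hd.neg_one_pow, conj_mul', ← ofReal_pow, ← ofReal_neg, ← ofReal_one, ofReal_inj] at h
  nlinarith [sq_nonneg ‖c‖]

theorem odd_degree_of_commutes_with_tau_general
    (d : ℕ) (P Q : Polynomial ℂ)
    (hcop : IsCoprime P Q) (hdeg : max P.natDegree Q.natDegree = d)
    (hcomm : ∀ p, tauSph (ratMap P Q p) = ratMap P Q (tauSph p)) :
    Odd d := by
  have hP := ne_zero_left_of_commute_tauSph hcop hcomm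
  have hQ := ne_zero_right_of_commute_tauSph hcop hcomm
  have hPd : P.natDegree ≤ d := hdeg ▸ le_max_left _ _
  have hQd : Q.natDegree ≤ d := hdeg ▸ le_max_right _ _
  have hcop' : IsCoprime (P.map conj) (Q.map conj) := hcop.map (mapRingHom conj)
  obtain ⟨c, hPc, hQc⟩ := hcop'.exists_C_of_mul_add_mul_eq_zero
    (Polynomial.map_ne_zero hP) (Polynomial.map_ne_zero hQ)
    (by simpa [hdeg] using natDegree_negReflect_le hPd)
    (by simpa [hdeg] using natDegree_negReflect_le hQd)
    (map_conj_mul_negReflect_add_eq_zero_of_commute_tauSph hP hQ hPd hQd hcomm)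
  have hPc' : negReflect d (P.map conj) = C (conj c) * Q := by
    simpa [map_negReflect, Polynomial.map_map] using congrArg (Polynomial.map conj) hPc
  have hPcc : C ((-1) ^ d) * P.map conj = C (-(conj c * c)) * P.map conj := by
    rw [← negReflect_negReflect (by rwa [natDegree_map]), hPc', negReflect_C_mul, hQc, C_neg,
      C_mul]
    ring
  exact odd_of_neg_one_pow_eq_neg_conj_mul_self
    (C_inj.mp (mul_right_cancel₀ (Polynomial.map_ne_zero hP) hPcc))

/-- a rational map of degree `d ≥ 2` commuting with the imaginary
reflection `τ(z) = -1/conj z` has odd degree. -/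
theorem odd_degree_of_commutes_with_tau
    (d : ℕ) (hd : 2 ≤ d) (P Q : Polynomial ℂ)
    (hcop : IsCoprime P Q) (hdeg : max P.natDegree Q.natDegree = d)
    (hcomm : ∀ p, tauSph (ratMap P Q p) = ratMap P Q (tauSph p)) :
    Odd d :=
  odd_degree_of_commutes_with_tau_general d P Q hcop hdeg hcomm
end

section
/- Let φ be a rational map admitting a holomorphic automorphism of the form V(w) = β/w with |β| ≠ 1, and admitting the imaginary reflection τ(w) = -1/conj(w) as an antiholomorphic automorphism. Then (τ ∘ V)² is a Möbius transformation of infinite order commuting with φ; hence no rational map of degree ≥ 2 admits both. -/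
open OnePoint Complex Polynomial

/-!
`τ ∘ V` is `z ↦ -z̄ / β̄`, so `(τ ∘ V)²` is the dilation `z ↦ z / c` with `c = |β|²`, a positive
real `≠ 1`; it has infinite order and commutes with `φ = P / Q` because `V` and `τ` do.
Commuting with the dilation means `P(cz) Q(z) = c P(z) Q(cz)`. By coprimality `P ∣ P(c ·)` and
`Q ∣ Q(c ·)`, so these are `c ^ deg P • P` and `c ^ deg Q • Q`; hence `deg P = deg Q + 1`, and
unless `deg Q = 0` both constant terms vanish (as `c` is not a root of unity), so `X ∣ P, Q`.
Thus `φ` has degree at most one.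
-/

open Function

lemma ne_zero_of_injective_pow {M₀ : Type*} [MonoidWithZero M₀] {c : M₀}
    (hc : Injective (c ^ · : ℕ → M₀)) : c ≠ 0 := by
  rintro rfl
  exact absurd (@hc 1 2 (by simp)) (by norm_num)

namespace Polynomial

variable {K : Type*} [Field K]

lemma comp_C_mul_X_eq_C_pow_mul_of_dvd {p : K[X]} {c : K} (hc : c ≠ 0)
    (h : p ∣ p.comp (C c * X)) : p.comp (C c * X) = C (c ^ p.natDegree) * p := by
  rcases eq_or_ne p 0 with rfl | hp
  · simp
  have hdeg : (p.comp (C c * X)).natDegree = p.natDegree := by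
    rw [natDegree_comp, natDegree_C_mul_X c hc, mul_one]
  obtain ⟨u, hu⟩ := associated_of_dvd_of_natDegree_le h
    ((comp_C_mul_X_eq_zero_iff (mem_nonZeroDivisors_of_ne_zero hc)).not.mpr hp) hdeg.le
  obtain ⟨r, -, hr⟩ := isUnit_iff.mp u.isUnit
  have hlead := congrArg (coeff · p.natDegree) hu
  simp only [← hr, coeff_mul_C, comp_C_mul_X_coeff] at hlead
  rw [← hu, ← hr, mul_comm, mul_left_cancel₀ (leadingCoeff_ne_zero.mpr hp) hlead]

lemma X_dvd_of_comp_C_mul_X_eq_C_mul {p : K[X]} {a c : K} (ha : a ≠ 1)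
    (h : p.comp (C c * X) = C a * p) : X ∣ p := by
  have h0 := congrArg (coeff · 0) h
  simp only [comp_C_mul_X_coeff, pow_zero, mul_one, coeff_C_mul] at h0
  refine X_dvd_iff.mpr ?_
  by_contra hp
  exact ha (mul_right_cancel₀ hp (by rw [one_mul]; exact h0.symm))

lemma natDegree_le_one_of_comp_C_mul_X_mul_eq {P Q : K[X]} {c : K}
    (hc : Injective (c ^ · : ℕ → K)) (hPQ : IsCoprime P Q)
    (h : P.comp (C c * X) * Q = C c * (P * Q.comp (C c * X))) :
    P.natDegree ≤ 1 ∧ Q.natDegree = 0 := by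
  have hc0 := ne_zero_of_injective_pow hc
  have pow_ne_one : ∀ k ≠ 0, c ^ k ≠ 1 := fun k hk h => hk (hc (by simpa using h))
  rcases eq_or_ne P 0 with rfl | hP
  · simp [natDegree_eq_zero_of_isUnit (isCoprime_zero_left.mp hPQ)]
  rcases eq_or_ne Q 0 with rfl | hQ
  · simp [natDegree_eq_zero_of_isUnit (isCoprime_zero_right.mp hPQ)]
  have hA : P.comp (C c * X) = C (c ^ P.natDegree) * P :=
    comp_C_mul_X_eq_C_pow_mul_of_dvd hc0 <| hPQ.dvd_of_dvd_mul_right <| by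
      rw [h]; exact (dvd_mul_right P _).mul_left (C c)
  have hB : Q.comp (C c * X) = C (c ^ Q.natDegree) * Q :=
    comp_C_mul_X_eq_C_pow_mul_of_dvd hc0 <| hPQ.symm.dvd_of_dvd_mul_left <|
      (isUnit_C.mpr hc0.isUnit).dvd_mul_left.mp <| by rw [← h]; exact dvd_mul_left Q _
  have hmn : P.natDegree = Q.natDegree + 1 := by
    rw [hA, hB] at h
    refine hc (C_injective (mul_left_cancel₀ (mul_ne_zero hP hQ) ?_))
    simp only [pow_succ, C_mul]
    linear_combination h
  have hn : Q.natDegree = 0 := by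
    by_contra hn
    exact not_isUnit_X <| hPQ.isUnit_of_dvd'
      (X_dvd_of_comp_C_mul_X_eq_C_mul (pow_ne_one _ (by omega)) hA)
      (X_dvd_of_comp_C_mul_X_eq_C_mul (pow_ne_one _ hn) hB)
  omega

end Polynomial

lemma moeb_scale_coe {c : ℂ} (hc : c ≠ 0) (z : ℂ) :
    moeb 1 0 0 c z = ((z / c : ℂ) : OnePoint ℂ) := by
  simp [moeb, hc]

@[simp]
lemma moeb_scale_infty (c : ℂ) : moeb 1 0 0 c ∞ = ∞ := by
  simp [moeb]

lemma iterate_moeb_scale_coe {c : ℂ} (hc : c ≠ 0) (k : ℕ) (z : ℂ) :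
    (moeb 1 0 0 c)^[k] z = ((z / c ^ k : ℂ) : OnePoint ℂ) := by
  induction k with
  | zero => simp
  | succ k ih => rw [iterate_succ_apply', ih, moeb_scale_coe hc, div_div, pow_succ]

lemma iterate_moeb_scale_ne_id {c : ℂ} (hc : Injective (c ^ · : ℕ → ℂ)) {m : ℕ} (hm : 0 < m) :
    (moeb 1 0 0 c)^[m] ≠ id := by
  have hc0 := ne_zero_of_injective_pow hc
  intro hid
  have h1 := iterate_moeb_scale_coe hc0 m 1
  rw [hid, id_eq, OnePoint.coe_eq_coe, eq_comm, div_eq_one_iff_eq (pow_ne_zero m hc0),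
    eq_comm, ← pow_zero c] at h1
  exact hm.ne' (hc h1)

lemma injective_pow_mul_conj {β : ℂ} (hβ0 : β ≠ 0) (hβ : ‖β‖ ≠ 1) :
    Injective ((β * (starRingEnd ℂ) β) ^ · : ℕ → ℂ) := by
  have hpos : 0 < normSq β := normSq_pos.mpr hβ0
  have hne : normSq β ≠ 1 := by
    rwa [normSq_eq_norm_sq, Ne, pow_eq_one_iff_of_nonneg (norm_nonneg β) two_ne_zero]
  intro a b h
  simp only [mul_conj, ← ofReal_pow, ofReal_inj] at h
  exact pow_right_injective₀ hpos hne h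

lemma tauSph_moeb_coe {β : ℂ} (hβ : β ≠ 0) (z : ℂ) :
    tauSph (moeb 0 β 1 0 z) = ((-(starRingEnd ℂ) z / (starRingEnd ℂ) β : ℂ) : OnePoint ℂ) := by
  rcases eq_or_ne z 0 with rfl | hz
  · simp [tauSph, sphConj, moeb]
  · simp [tauSph, sphConj, moeb, hz, hβ, div_div_eq_mul_div]

@[simp]
lemma tauSph_moeb_infty (β : ℂ) : tauSph (moeb 0 β 1 0 ∞) = ∞ := by
  simp [tauSph, sphConj, moeb]

lemma tauSph_moeb_tauSph_moeb {β : ℂ} (hβ : β ≠ 0) (p : OnePoint ℂ) :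
    tauSph (moeb 0 β 1 0 (tauSph (moeb 0 β 1 0 p))) = moeb 1 0 0 (β * (starRingEnd ℂ) β) p := by
  induction p using OnePoint.rec with
  | infty => simp
  | coe z =>
    have hβ' : (starRingEnd ℂ) β ≠ 0 := by simpa using hβ
    rw [tauSph_moeb_coe hβ, tauSph_moeb_coe hβ, moeb_scale_coe (mul_ne_zero hβ hβ')]
    simp only [map_div₀, map_neg, conj_conj]
    field_simp

lemma ratMap_coe_eq_infty_iff {P Q : ℂ[X]} {z : ℂ} : ratMap P Q z = ∞ ↔ Q.eval z = 0 := by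
  by_cases hz : Q.eval z = 0 <;> simp [ratMap, hz]

lemma ratMap_coe_of_eval_ne_zero {P Q : ℂ[X]} {z : ℂ} (hz : Q.eval z ≠ 0) :
    ratMap P Q z = ((P.eval z / Q.eval z : ℂ) : OnePoint ℂ) := by
  simp [ratMap, hz]

lemma comp_C_mul_X_mul_eq_of_commute {P Q : ℂ[X]} {c : ℂ} (hc : c ≠ 0)
    (h : Function.Commute (moeb 1 0 0 c) (ratMap P Q)) :
    P.comp (C c * X) * Q = C c * (P * Q.comp (C c * X)) := by
  refine Polynomial.funext fun w => ?_
  have hw := h (c * w)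
  rw [moeb_scale_coe hc, mul_div_cancel_left₀ w hc] at hw
  simp only [eval_mul, eval_comp, eval_C, eval_X]
  by_cases hQc : Q.eval (c * w) = 0
  · rw [ratMap_coe_eq_infty_iff.mpr hQc, moeb_scale_infty, eq_comm,
      ratMap_coe_eq_infty_iff] at hw
    simp [hQc, hw]
  · have hQ : Q.eval w ≠ 0 := by
      rw [Ne, ← ratMap_coe_eq_infty_iff (P := P), ← hw, ratMap_coe_of_eval_ne_zero hQc,
        moeb_scale_coe hc]
      exact OnePoint.coe_ne_infty _
    rw [ratMap_coe_of_eval_ne_zero hQc, ratMap_coe_of_eval_ne_zero hQ, moeb_scale_coe hc,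
      OnePoint.coe_eq_coe] at hw
    field_simp at hw
    linear_combination hw

/-- if `φ` of degree `≥ 2` admitted both `V(w) = β/w` (`|β| ≠ 1`)
and the imaginary reflection `τ` as automorphisms, then `(τ∘V)²` would be a
Möbius transformation of infinite order commuting with `φ`; this is impossible. -/
theorem no_loxodromic_automorphism
    (d : ℕ) (hd : 2 ≤ d) (P Qp : Polynomial ℂ) (hcop : IsCoprime P Qp)
    (hdeg : max P.natDegree Qp.natDegree = d)
    (β : ℂ) (hβ0 : β ≠ 0) (hβ : ‖β‖ ≠ 1)
    (hV : ∀ p, moeb 0 β 1 0 (ratMap P Qp p) = ratMap P Qp (moeb 0 β 1 0 p))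
    (hτ : ∀ p, tauSph (ratMap P Qp p) = ratMap P Qp (tauSph p)) :
    (∀ p, tauSph (moeb 0 β 1 0 (tauSph (moeb 0 β 1 0 p)))
        = moeb 1 0 0 (β * (starRingEnd ℂ) β) p)
    ∧ (∀ m : ℕ, 0 < m → (fun p => moeb 1 0 0 (β * (starRingEnd ℂ) β) p)^[m] ≠ id)
    ∧ (∀ p, moeb 1 0 0 (β * (starRingEnd ℂ) β) (ratMap P Qp p)
        = ratMap P Qp (moeb 1 0 0 (β * (starRingEnd ℂ) β) p))
    ∧ False := by
  set c := β * (starRingEnd ℂ) β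
  have hc : Injective (c ^ · : ℕ → ℂ) := injective_pow_mul_conj hβ0 hβ
  have hsq : tauSph ∘ moeb 0 β 1 0 ∘ tauSph ∘ moeb 0 β 1 0 = moeb 1 0 0 c :=
    funext (tauSph_moeb_tauSph_moeb hβ0)
  have hcomm : Function.Commute (moeb 1 0 0 c) (ratMap P Qp) := by
    rw [← hsq]
    exact Function.Commute.comp_left hτ (.comp_left hV (.comp_left hτ hV))
  refine ⟨tauSph_moeb_tauSph_moeb hβ0, fun m hm => iterate_moeb_scale_ne_id hc hm, hcomm, ?_⟩
  have := natDegree_le_one_of_comp_C_mul_X_mul_eq hc hcop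
    (comp_C_mul_X_mul_eq_of_commute (ne_zero_of_injective_pow hc) hcomm)
  omega
end
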